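/- Let 0 ≤ t_V and 0 < t_D, and let q_1, …, q_n ∈ [0,1] with q_1 ≤ q_2 ≤ … ≤ q_n (rejection probabilities sorted increasingly, i.e., acceptance probabilities p_i = 1 − q_i sorted decreasingly). Let k be the number of indices i with p_i > t_V / t_D. Then for every m ∈ {0, …, n} and every sequence (q_{i_1}, …, q_{i_m}) with pairwise distinct indices i_1, …, i_m ∈ {1, …, n}, one has T(q_1, …, q_k) ≤ T(q_{i_1}, …, q_{i_m}). That is, the strategy that verifies exactly the boxes whose acceptance probability exceeds t_V / t_D, in decreasing order of acceptance probability, followed by manual drawing if all are rejected, minimizes the expected annotation time over all planned strategies V^m D applied to any sequence of distinct boxes. -/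

import Mathlib

/-!
Swapping two adjacent verifications with rejection probabilities `a ≤ b` changes the expected
duration by `(b - a) t_V`, so reordering any strategy by increasing rejection probability, and
then replacing its `i`-th box by the `i`-th best box, never increases the duration. Among the
prefixes of the sorted order, appending a box replaces the final draw `t_D` by `t_V + q t_D`,
which helps exactly when `1 - q > t_V / t_D`; so the best prefix has length `k`.
-/

/-- Expected episode duration: `expDur tV tD [q₁, …, qₘ]` is the expected annotation time of
the strategy `VᵐD` that verifies boxes with rejection probabilities `q₁, …, qₘ` in order
(each verification taking time `tV`) and draws manually (taking time `tD`) if all are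
rejected: `expDur tV tD [] = tD` and `expDur tV tD (q :: qs) = tV + q * expDur tV tD qs`. -/
noncomputable def expDur (tV tD : ℝ) : List ℝ → ℝ
  | [] => tD
  | q :: qs => tV + q * expDur tV tD qs

theorem lt_card_filter_range_iff {p : ℕ → Prop} [DecidablePred p] {n i : ℕ}
    (hp : ∀ i j, i ≤ j → j < n → p j → p i) (hi : i < n) :
    i < ((Finset.range n).filter p).card ↔ p i := by
  constructor
  · intro hcard
    by_contra hpi
    have hsub : (Finset.range n).filter p ⊆ Finset.range i := fun j hj => by
      rw [Finset.mem_filter, Finset.mem_range] at hj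
      exact Finset.mem_range.2 (lt_of_not_ge fun hij => hpi (hp i j hij hj.1 hj.2))
    have := Finset.card_le_card hsub
    rw [Finset.card_range] at this
    omega
  · intro hpi
    have hsub : Finset.range (i + 1) ⊆ (Finset.range n).filter p := fun j hj => by
      rw [Finset.mem_range] at hj
      exact Finset.mem_filter.2 ⟨Finset.mem_range.2 (by omega), hp j i (by omega) hi hpi⟩
    simpa using Finset.card_le_card hsub

theorem Fin.val_le_of_strictMono {m : ℕ} {g : Fin m → ℕ} (hg : StrictMono g) (i : Fin m) :
    (i : ℕ) ≤ g i := by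
  obtain ⟨i, hi⟩ := i
  induction i with
  | zero => exact Nat.zero_le _
  | succ i ih =>
    exact Nat.succ_le_of_lt ((ih (by omega)).trans_lt (hg (Fin.mk_lt_mk.2 (Nat.lt_succ_self i))))

section expDur

variable {tV tD : ℝ}

theorem expDur_nonneg (htV : 0 ≤ tV) (htD : 0 ≤ tD) :
    ∀ {L : List ℝ}, (∀ a ∈ L, 0 ≤ a) → 0 ≤ expDur tV tD L
  | [], _ => htD
  | a :: L, hL => by
    rw [List.forall_mem_cons] at hL
    exact add_nonneg htV (mul_nonneg hL.1 (expDur_nonneg htV htD hL.2))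

theorem expDur_append : ∀ L M : List ℝ, expDur tV tD (L ++ M) = expDur tV (expDur tV tD M) L
  | [], _ => rfl
  | a :: L, M => by simp only [List.cons_append, expDur, expDur_append L M]

theorem expDur_mono_base {x y : ℝ} (hxy : x ≤ y) :
    ∀ {L : List ℝ}, (∀ a ∈ L, 0 ≤ a) → expDur tV x L ≤ expDur tV y L
  | [], _ => hxy
  | a :: L, hL => by
    rw [List.forall_mem_cons] at hL
    exact add_le_add_right (mul_le_mul_of_nonneg_left (expDur_mono_base hxy hL.2) hL.1) _

theorem expDur_le_base :
    ∀ {L : List ℝ}, (∀ a ∈ L, 0 ≤ a ∧ tV + a * tD ≤ tD) → expDur tV tD L ≤ tD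
  | [], _ => le_rfl
  | a :: L, hL => by
    rw [List.forall_mem_cons] at hL
    calc tV + a * expDur tV tD L ≤ tV + a * tD :=
          add_le_add_right (mul_le_mul_of_nonneg_left (expDur_le_base hL.2) hL.1.1) _
      _ ≤ tD := hL.1.2

theorem base_le_expDur :
    ∀ {L : List ℝ}, (∀ a ∈ L, 0 ≤ a ∧ tD ≤ tV + a * tD) → tD ≤ expDur tV tD L
  | [], _ => le_rfl
  | a :: L, hL => by
    rw [List.forall_mem_cons] at hL
    calc tD ≤ tV + a * tD := hL.1.2
      _ ≤ tV + a * expDur tV tD L :=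
          add_le_add_right (mul_le_mul_of_nonneg_left (base_le_expDur hL.2) hL.1.1) _

theorem expDur_map_range_le (q : ℕ → ℝ) {k m : ℕ} (hq : ∀ i < max k m, 0 ≤ q i)
    (hgood : ∀ i < k, tV + q i * tD ≤ tD) (hbad : ∀ i, k ≤ i → i < m → tD ≤ tV + q i * tD) :
    expDur tV tD ((List.range k).map q) ≤ expDur tV tD ((List.range m).map q) := by
  have hnonneg : ∀ l ≤ max k m, ∀ a ∈ (List.range l).map q, 0 ≤ a := by
    simp only [List.mem_map, List.mem_range, forall_exists_index, and_imp]
    rintro l hl _ i hi rfl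
    exact hq i (by omega)
  rcases le_total k m with hkm | hmk
  · obtain ⟨d, rfl⟩ := Nat.exists_eq_add_of_le hkm
    rw [List.range_add, List.map_append, expDur_append]
    refine expDur_mono_base (base_le_expDur ?_) (hnonneg k (by omega))
    simp only [List.map_map, List.mem_map, List.mem_range, Function.comp_apply]
    rintro _ ⟨i, hi, rfl⟩
    exact ⟨hq _ (by omega), hbad _ (by omega) (by omega)⟩
  · obtain ⟨d, rfl⟩ := Nat.exists_eq_add_of_le hmk
    rw [List.range_add, List.map_append, expDur_append]
    refine expDur_mono_base (expDur_le_base ?_) (hnonneg m (by omega))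
    simp only [List.map_map, List.mem_map, List.mem_range, Function.comp_apply]
    rintro _ ⟨i, hi, rfl⟩
    exact ⟨hq _ (by omega), hgood _ (by omega)⟩

theorem expDur_cons_cons_le (htV : 0 ≤ tV) {a b : ℝ} (hab : a ≤ b) (L : List ℝ) :
    expDur tV tD (a :: b :: L) ≤ expDur tV tD (b :: a :: L) := by
  simp only [expDur]
  nlinarith [mul_le_mul_of_nonneg_right hab htV]

theorem expDur_orderedInsert_le (htV : 0 ≤ tV) (a : ℝ) :
    ∀ {L : List ℝ}, (∀ b ∈ L, 0 ≤ b) →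
      expDur tV tD (L.orderedInsert (· ≤ ·) a) ≤ expDur tV tD (a :: L)
  | [], _ => le_rfl
  | b :: L, hL => by
    rw [List.forall_mem_cons] at hL
    by_cases hab : a ≤ b
    · simp [hab]
    · rw [List.orderedInsert_cons, if_neg hab]
      calc tV + b * expDur tV tD (L.orderedInsert (· ≤ ·) a)
          ≤ expDur tV tD (b :: a :: L) :=
            add_le_add_right (mul_le_mul_of_nonneg_left (expDur_orderedInsert_le htV a hL.2) hL.1) _
        _ ≤ expDur tV tD (a :: b :: L) := expDur_cons_cons_le htV (le_of_not_ge hab) L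

theorem expDur_insertionSort_le (htV : 0 ≤ tV) :
    ∀ {L : List ℝ}, (∀ a ∈ L, 0 ≤ a) → expDur tV tD (L.insertionSort (· ≤ ·)) ≤ expDur tV tD L
  | [], _ => le_rfl
  | a :: L, hL => by
    rw [List.forall_mem_cons] at hL
    have hsorted : ∀ b ∈ L.insertionSort (· ≤ ·), 0 ≤ b := fun b hb =>
      hL.2 b ((List.perm_insertionSort _ L).mem_iff.1 hb)
    calc expDur tV tD ((L.insertionSort (· ≤ ·)).orderedInsert (· ≤ ·) a)
        ≤ tV + a * expDur tV tD (L.insertionSort (· ≤ ·)) := expDur_orderedInsert_le htV a hsorted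
      _ ≤ tV + a * expDur tV tD L :=
          add_le_add_right (mul_le_mul_of_nonneg_left (expDur_insertionSort_le htV hL.2) hL.1) _

theorem expDur_le_of_perm (htV : 0 ≤ tV) {L M : List ℝ} (hML : M.Perm L)
    (hM : M.Pairwise (· ≤ ·)) (hL : ∀ a ∈ L, 0 ≤ a) : expDur tV tD M ≤ expDur tV tD L := by
  rw [(hML.trans (L.perm_insertionSort _).symm).eq_of_pairwise' hM (L.pairwise_insertionSort _)]
  exact expDur_insertionSort_le htV hL

theorem expDur_ofFn_mono (htV : 0 ≤ tV) (htD : 0 ≤ tD) :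
    ∀ {m : ℕ} {f g : Fin m → ℝ}, (∀ i, 0 ≤ f i) → (∀ i, f i ≤ g i) →
      expDur tV tD (List.ofFn f) ≤ expDur tV tD (List.ofFn g)
  | 0, _, _, _, _ => le_rfl
  | m + 1, f, g, hf, hfg => by
    rw [List.ofFn_succ, List.ofFn_succ]
    have htail : ∀ a ∈ List.ofFn fun i => f i.succ, 0 ≤ a := by
      simpa [List.mem_ofFn] using fun i : Fin m => hf i.succ
    exact add_le_add_right (mul_le_mul (hfg 0) (expDur_ofFn_mono htV htD (fun i => hf _)
      (fun i => hfg _)) (expDur_nonneg htV htD htail) ((hf 0).trans (hfg 0))) _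

theorem expDur_map_range_le_ofFn (htV : 0 ≤ tV) (htD : 0 ≤ tD) {n m : ℕ} {q : ℕ → ℝ}
    (hq : ∀ i < n, 0 ≤ q i) (hsorted : ∀ i j, i ≤ j → j < n → q i ≤ q j)
    {idx : Fin m → ℕ} (hinj : Function.Injective idx) (hidx : ∀ j, idx j < n) :
    expDur tV tD ((List.range m).map q) ≤ expDur tV tD (List.ofFn fun j => q (idx j)) := by
  set σ := Tuple.sort idx
  have hmono : StrictMono (idx ∘ σ) :=
    (Tuple.monotone_sort idx).strictMono_of_injective (hinj.comp σ.injective)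
  have hle : ∀ i : Fin m, (i : ℕ) ≤ idx (σ i) := Fin.val_le_of_strictMono hmono
  have hrange : (List.range m).map q = List.ofFn fun i : Fin m => q i :=
    List.ext_getElem (by simp) (by simp)
  rw [hrange]
  calc expDur tV tD (List.ofFn fun i : Fin m => q i)
      ≤ expDur tV tD (List.ofFn ((fun j => q (idx j)) ∘ σ)) :=
        expDur_ofFn_mono htV htD (fun i => hq _ ((hle i).trans_lt (hidx _)))
          (fun i => hsorted _ _ (hle i) (hidx _))
    _ ≤ expDur tV tD (List.ofFn fun j => q (idx j)) := by
        refine expDur_le_of_perm htV (σ.ofFn_comp_perm _) ?_ ?_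
        · exact List.pairwise_ofFn.2 fun i j hij => hsorted _ _ (hmono.monotone hij.le) (hidx _)
        · simpa [List.mem_ofFn] using fun j => hq _ (hidx j)

end expDur

/-- Theorem 1 (optimality of IAD-Prob): with rejection probabilities sorted increasingly and
`k` the number of boxes whose acceptance probability exceeds `t_V / t_D`, verifying exactly
those `k` boxes in decreasing order of acceptance probability (followed by drawing)
minimizes the expected annotation time over all strategies `VᵐD` applied to any sequence
of distinct boxes. -/
theorem iadProb_optimal (tV tD : ℝ) (htV : 0 ≤ tV) (htD : 0 < tD)
    (n : ℕ) (q : ℕ → ℝ)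
    (hq : ∀ i < n, 0 ≤ q i ∧ q i ≤ 1)
    (hsorted : ∀ i j, i ≤ j → j < n → q i ≤ q j)
    (k : ℕ) (hk : k = ((Finset.range n).filter fun i => tV / tD < 1 - q i).card)
    (m : ℕ) (hm : m ≤ n)
    (idx : Fin m → ℕ) (hinj : Function.Injective idx) (hidx : ∀ j, idx j < n) :
    expDur tV tD ((List.range k).map q)
      ≤ expDur tV tD (List.ofFn fun j => q (idx j)) := by
  have hkn : k ≤ n := hk ▸ (Finset.card_filter_le _ _).trans (Finset.card_range n).le
  have hthreshold : ∀ i < n, i < k ↔ tV + q i * tD < tD := by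
    intro i hi
    rw [hk, lt_card_filter_range_iff (fun i j hij hjn hj => hj.trans_le
      (by linarith [hsorted i j hij hjn])) hi, div_lt_iff₀ htD]
    constructor <;> intro h <;> linarith
  calc expDur tV tD ((List.range k).map q)
      ≤ expDur tV tD ((List.range m).map q) :=
        expDur_map_range_le q (fun i hi => (hq i (by omega)).1)
          (fun i hi => ((hthreshold i (by omega)).1 hi).le)
          (fun i hki _ => not_lt.1 fun h => not_lt.2 hki ((hthreshold i (by omega)).2 h))
    _ ≤ expDur tV tD (List.ofFn fun j => q (idx j)) :=
        expDur_map_range_le_ofFn htV htD.le (fun i hi => (hq i hi).1) hsorted hinj hidx
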